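/- arXiv:1603.00668 — 3 statements merged into one kernel-verified Lean document; each statement's English description precedes it below -/
import Mathlib

section
/- For every 1 ≤ R ≤ D, the total squared POD projection error of the snapshots equals the sum of the truncated eigenvalues: Σ_{n=1}^N ‖u_n − P^R u_n‖_V² = Σ_{r=R+1}^N λ_r. -/
/-!
The POD modes `φ r`, `r < D`, are orthonormal and satisfy `⟪φ r, u n⟫ = √(λ r) * a r n`, so by
Pythagoras `‖u n - P^R (u n)‖² = ‖u n‖² - ∑_{r < R} λ r * (a r n)²`. Summed over `n`, the first
terms give `trace G`, which is `∑ r, λ r` because the rows `a r` form an orthonormal eigenbasis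
of `G`, and the second give `∑_{r < R} λ r` because each `a r` is a unit vector.
-/

open scoped RealInnerProductSpace

/-- Orthogonal projection onto a submodule, as a plain function; it equals the usual
orthogonal projection whenever the submodule is finite-dimensional. -/
noncomputable def orthProj {V : Type*} [NormedAddCommGroup V] [InnerProductSpace ℝ V]
    (K : Submodule ℝ V) (x : V) : V := by
  classical
  exact if h : FiniteDimensional ℝ K then
    haveI := h
    (K.orthogonalProjection x : V)
  else 0

section

open Matrix Submodule

theorem Matrix.trace_eq_sum_of_mulVec_eq_smul {n R : Type*} [Fintype n] [DecidableEq n]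
    [CommRing R] {A G : Matrix n n R} {lam : n → R} (hA : A * Aᵀ = 1)
    (hG : ∀ r, G *ᵥ A r = lam r • A r) : G.trace = ∑ r, lam r := by
  have hdiag : ∀ r, (A * (G * Aᵀ)) r r = lam r := by
    intro r
    have hrow : A r ⬝ᵥ A r = 1 := by
      simpa [Matrix.mul_apply, dotProduct] using congrFun (congrFun hA r) r
    have hquad : (A * (G * Aᵀ)) r r = A r ⬝ᵥ (G *ᵥ A r) := by
      simp [Matrix.mul_apply, dotProduct, mulVec]
    rw [hquad, hG, dotProduct_smul, hrow, smul_eq_mul, mul_one]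
  calc G.trace = (G * (Aᵀ * A)).trace := by rw [mul_eq_one_comm.mp hA, Matrix.mul_one]
    _ = (A * (G * Aᵀ)).trace := by rw [← Matrix.mul_assoc, trace_mul_comm]
    _ = ∑ r, lam r := Finset.sum_congr rfl fun r _ => hdiag r

variable {V : Type*} [NormedAddCommGroup V] [InnerProductSpace ℝ V]

theorem Matrix.trace_gram_real {ι : Type*} [Fintype ι] (u : ι → V) :
    (gram ℝ u).trace = ∑ n, ‖u n‖ ^ 2 := by
  simp [trace, gram_apply]

theorem orthProj_eq_starProjection (K : Submodule ℝ V) [FiniteDimensional ℝ K] (x : V) :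
    orthProj K x = K.starProjection x := by
  rw [orthProj, dif_pos ‹_›]
  rfl

theorem Orthonormal.norm_sub_orthProj_span_sq {ι : Type*} [Fintype ι] {v : ι → V}
    (hv : Orthonormal ℝ v) (x : V) :
    ‖x - orthProj (span ℝ (Set.range v)) x‖ ^ 2 = ‖x‖ ^ 2 - ∑ i, ⟪v i, x⟫ ^ 2 := by
  set K := span ℝ (Set.range v)
  have : FiniteDimensional ℝ K := FiniteDimensional.span_of_finite ℝ (Set.finite_range v)
  let b : OrthonormalBasis ι ℝ K :=
    (Module.Basis.span hv.linearIndependent).toOrthonormalBasis (by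
      rw [show ⇑(Module.Basis.span hv.linearIndependent) = _ from
        funext (Module.Basis.span_apply hv.linearIndependent)]
      exact orthonormal_span hv)
  have hparseval : ‖K.starProjection x‖ ^ 2 = ∑ i, ⟪v i, x⟫ ^ 2 := by
    rw [starProjection_apply, norm_coe, ← b.sum_sq_norm_inner_right]
    refine Finset.sum_congr rfl fun i _ => ?_
    rw [Real.norm_eq_abs, sq_abs, inner_orthogonalProjectionOnto_eq_of_mem_left]
    simp [b, Module.Basis.span_apply]
  have hpythagoras := norm_sq_eq_add_norm_sq_starProjection x K
  rw [starProjection_orthogonal_val] at hpythagoras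
  rw [orthProj_eq_starProjection]
  linarith

noncomputable def podBasis {ι κ : Type*} [Fintype ι] (u : ι → V) (a : κ → ι → ℝ) (lam : κ → ℝ)
    (r : κ) : V :=
  (√(lam r))⁻¹ • ∑ n, a r n • u n

section podBasis

variable {ι κ : Type*} [Fintype ι] {u : ι → V} {a : κ → ι → ℝ} {lam : κ → ℝ}

theorem inner_sum_smul_left_eq_gram_mulVec (c : ι → ℝ) (m : ι) :
    ⟪∑ n, c n • u n, u m⟫ = (gram ℝ u *ᵥ c) m := by
  simp only [sum_inner, real_inner_smul_left, mulVec, dotProduct, gram_apply]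
  exact Finset.sum_congr rfl fun n _ => by rw [real_inner_comm, mul_comm]

theorem inner_podBasis_left {r : κ} (h_eig : gram ℝ u *ᵥ a r = lam r • a r) (hpos : 0 < lam r)
    (m : ι) : ⟪podBasis u a lam r, u m⟫ = √(lam r) * a r m := by
  have hsqrt : √(lam r) ≠ 0 := (Real.sqrt_pos.mpr hpos).ne'
  rw [podBasis, real_inner_smul_left, inner_sum_smul_left_eq_gram_mulVec, h_eig, Pi.smul_apply,
    smul_eq_mul, inv_mul_eq_iff_eq_mul₀ hsqrt, ← mul_assoc, Real.mul_self_sqrt hpos.le]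

theorem inner_podBasis_podBasis {r s : κ} (h_eig : gram ℝ u *ᵥ a r = lam r • a r)
    (hpos : 0 < lam r) :
    ⟪podBasis u a lam r, podBasis u a lam s⟫ = √(lam r) / √(lam s) * (a r ⬝ᵥ a s) := by
  rw [podBasis.eq_1 u a lam s, real_inner_smul_right, inner_sum]
  simp only [real_inner_smul_right, inner_podBasis_left h_eig hpos, dotProduct, Finset.mul_sum]
  exact Finset.sum_congr rfl fun n _ => by ring

theorem orthonormal_podBasis [DecidableEq κ] {S : Set κ}
    (h_eig : ∀ r, gram ℝ u *ᵥ a r = lam r • a r) (hpos : ∀ r ∈ S, 0 < lam r)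
    (ha : ∀ r s, a r ⬝ᵥ a s = if r = s then 1 else 0) :
    Orthonormal ℝ fun r : S => podBasis u a lam r := by
  classical
  rw [orthonormal_iff_ite]
  rintro ⟨r, hr⟩ ⟨s, hs⟩
  rw [inner_podBasis_podBasis (h_eig r) (hpos r hr), ha]
  by_cases hrs : r = s
  · subst hrs
    simp [(Real.sqrt_pos.mpr (hpos r hr)).ne']
  · simp [hrs]

theorem sum_inner_podBasis_left_sq {r : κ} (h_eig : gram ℝ u *ᵥ a r = lam r • a r)
    (hpos : 0 < lam r) : ∑ m, ⟪podBasis u a lam r, u m⟫ ^ 2 = lam r * (a r ⬝ᵥ a r) := by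
  simp only [inner_podBasis_left h_eig hpos, dotProduct, Finset.mul_sum, sq]
  refine Finset.sum_congr rfl fun m _ => ?_
  linear_combination (a r m * a r m) * Real.mul_self_sqrt hpos.le

end podBasis

end

theorem pod_truncation_error_general
    {V : Type*} [NormedAddCommGroup V] [InnerProductSpace ℝ V]
    {N D : ℕ}
    (u : Fin N → V)
    (G : Matrix (Fin N) (Fin N) ℝ)
    (hG : ∀ i j : Fin N, G i j = ⟪u i, u j⟫)
    (a : Fin N → Fin N → ℝ)
    (ha_orth : ∀ r s : Fin N, ∑ n : Fin N, a r n * a s n = if r = s then (1 : ℝ) else 0)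
    (lam : Fin N → ℝ)
    (h_eig : ∀ r : Fin N, G.mulVec (a r) = lam r • a r)
    (h_pos : ∀ r : Fin N, (r : ℕ) < D → 0 < lam r)
    (φ : Fin N → V)
    (hφ : ∀ r : Fin N, (r : ℕ) < D →
      φ r = (Real.sqrt (lam r))⁻¹ • ∑ n : Fin N, a r n • u n) :
    ∀ R : ℕ, 1 ≤ R → R ≤ D →
      ∑ n : Fin N,
          ‖u n - orthProj (Submodule.span ℝ (φ '' {r : Fin N | (r : ℕ) < R})) (u n)‖ ^ 2
        = ∑ r ∈ Finset.univ.filter (fun r : Fin N => R ≤ (r : ℕ)), lam r := by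
  intro R _ hRD
  obtain rfl : G = Matrix.gram ℝ u := Matrix.ext hG
  set s := Finset.univ.filter fun r : Fin N => (r : ℕ) < R
  have hs : {r : Fin N | (r : ℕ) < R} = s := by simp [s]
  have hD_of_mem : ∀ r ∈ s, (r : ℕ) < D := fun r hr =>
    lt_of_lt_of_le (Finset.mem_filter.mp hr).2 hRD
  have hφs : φ '' s = podBasis u a lam '' s := Set.image_congr fun r hr => hφ r (hD_of_mem r hr)
  have ha : ∀ r s, dotProduct (a r) (a s) = if r = s then 1 else 0 := ha_orth
  have hA : Matrix.of a * (Matrix.of a).transpose = 1 := by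
    ext r s
    simpa [Matrix.mul_apply, Matrix.one_apply] using ha_orth r s
  have hon := orthonormal_podBasis (S := s) h_eig (fun r hr => h_pos r (hD_of_mem r hr)) ha
  rw [hs, hφs, Set.image_eq_range]
  calc _ = ∑ n, (‖u n‖ ^ 2 - ∑ r : (s : Set (Fin N)), ⟪podBasis u a lam r, u n⟫ ^ 2) := by
        simp_rw [hon.norm_sub_orthProj_span_sq]
    _ = (Matrix.gram ℝ u).trace - ∑ r ∈ s, lam r := by
        rw [Finset.sum_sub_distrib, Finset.sum_comm, Matrix.trace_gram_real]
        refine congrArg _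
          ((Finset.sum_coe_sort s fun r => ∑ n, ⟪podBasis u a lam r, u n⟫ ^ 2).trans
            (Finset.sum_congr rfl fun r hr => ?_))
        rw [sum_inner_podBasis_left_sq (h_eig r) (h_pos r (hD_of_mem r hr)), ha, if_pos rfl,
          mul_one]
    _ = _ := by
        rw [Matrix.trace_eq_sum_of_mulVec_eq_smul hA h_eig,
          ← Finset.sum_filter_add_sum_filter_not _ (fun r : Fin N => (r : ℕ) < R)]
        simp [s]

/-- **POD projection error equals the sum of truncated eigenvalues.** For every `1 ≤ R ≤ D`, `∑ n, ‖u n - P^R (u n)‖² = ∑_{r ≥ R} λ r` (zero-based indexing), where `P^R` is the orthogonal projection onto the span of the first `R` POD basis functions. -/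
theorem pod_truncation_error
    {V : Type*} [NormedAddCommGroup V] [InnerProductSpace ℝ V]
    {N D : ℕ} (hD : D ≤ N)
    (u : Fin N → V)
    (G : Matrix (Fin N) (Fin N) ℝ)
    (hG : ∀ i j : Fin N, G i j = ⟪u i, u j⟫)
    (a : Fin N → Fin N → ℝ)
    (ha_orth : ∀ r s : Fin N, ∑ n : Fin N, a r n * a s n = if r = s then (1 : ℝ) else 0)
    (lam : Fin N → ℝ)
    (h_eig : ∀ r : Fin N, G.mulVec (a r) = lam r • a r)
    (h_mono : ∀ r s : Fin N, r ≤ s → lam s ≤ lam r)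
    (h_nonneg : ∀ r : Fin N, 0 ≤ lam r)
    (h_pos : ∀ r : Fin N, (r : ℕ) < D → 0 < lam r)
    (h_zero : ∀ r : Fin N, D ≤ (r : ℕ) → lam r = 0)
    (φ : Fin N → V)
    (hφ : ∀ r : Fin N, (r : ℕ) < D →
      φ r = (Real.sqrt (lam r))⁻¹ • ∑ n : Fin N, a r n • u n) :
    ∀ R : ℕ, 1 ≤ R → R ≤ D →
      ∑ n : Fin N,
          ‖u n - orthProj (Submodule.span ℝ (φ '' {r : Fin N | (r : ℕ) < R})) (u n)‖ ^ 2
        = ∑ r ∈ Finset.univ.filter (fun r : Fin N => R ≤ (r : ℕ)), lam r :=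
  pod_truncation_error_general u G hG a ha_orth lam h_eig h_pos φ hφ
end

section
/- The POD basis is optimal in the mean-square sense: for every 1 ≤ R ≤ D and every V-orthonormal family ψ_1,…,ψ_R ∈ V, Σ_{n=1}^N ‖u_n − Σ_{k=1}^R (u_n, ψ_k)_V ψ_k‖_V² ≥ Σ_{r=R+1}^N λ_r; consequently the POD basis functions φ_1,…,φ_R attain the minimum of this quantity over all V-orthonormal families of size R. -/
/-!
Let `S r = ∑ n, a r n • u n = √λ_r φ_r`. As `a` is an orthogonal matrix and its rows are
eigenvectors of the Gram matrix, the `S r` are pairwise orthogonal with `‖S r‖² = λ_r`, and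
replacing `u` by `S` changes neither `∑ n, ‖u n‖²` nor `∑ n, ⟪u n, x⟫²` for any `x`.
Hence the error of an orthonormal family `ψ` is `∑ r, λ_r (1 - t r)` with
`t r = ∑ k, ⟪φ r, ψ k⟫²`. Bessel's inequality, applied to `ψ` and to the `φ r`, gives
`0 ≤ t r ≤ 1` and `∑ r, t r ≤ R`; for decreasing `λ` such weights satisfy
`∑ r, λ_r t r ≤ ∑ r < R, λ_r`. For `ψ = φ` the weights are the indicator of `{r < R}`.
-/

open scoped RealInnerProductSpace
open Finset Matrix

section

variable {V : Type*} [NormedAddCommGroup V] [InnerProductSpace ℝ V]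

section OrthogonalFamilies

variable {ι : Type*}

theorem Orthonormal.norm_sub_sum_inner_smul_sq {ψ : ι → V} (hψ : Orthonormal ℝ ψ)
    (s : Finset ι) (x : V) :
    ‖x - ∑ i ∈ s, ⟪x, ψ i⟫ • ψ i‖ ^ 2 = ‖x‖ ^ 2 - ∑ i ∈ s, ⟪x, ψ i⟫ ^ 2 := by
  have hx : ⟪x, ∑ i ∈ s, ⟪x, ψ i⟫ • ψ i⟫ = ∑ i ∈ s, ⟪x, ψ i⟫ ^ 2 := by
    simp_rw [inner_sum, real_inner_smul_right, sq]
  rw [norm_sub_sq_real, hx, ← real_inner_self_eq_norm_sq (∑ i ∈ s, _), hψ.inner_sum]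
  simp only [conj_trivial, ← sq]
  ring

theorem orthonormal_inv_norm_smul {v : ι → V} (hv : Pairwise fun i j => ⟪v i, v j⟫ = 0)
    (hv0 : ∀ i, v i ≠ 0) : Orthonormal ℝ fun i => ‖v i‖⁻¹ • v i := by
  refine ⟨fun i => ?_, fun i j hij => ?_⟩ <;> dsimp only
  · rw [norm_smul, norm_inv, norm_norm, inv_mul_cancel₀ (norm_ne_zero_iff.2 (hv0 i))]
  · rw [real_inner_smul_left, real_inner_smul_right, hv hij, mul_zero, mul_zero]

theorem sum_inner_sq_div_norm_sq_le [Fintype ι] {v : ι → V}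
    (hv : Pairwise fun i j => ⟪v i, v j⟫ = 0) (x : V) :
    ∑ i, ⟪v i, x⟫ ^ 2 / ‖v i‖ ^ 2 ≤ ‖x‖ ^ 2 := by
  set c : ι → ℝ := fun i => ⟪v i, x⟫ / ‖v i‖ ^ 2
  have hc : ∀ i, c i * ⟪v i, x⟫ = ⟪v i, x⟫ ^ 2 / ‖v i‖ ^ 2 := fun i => by
    simp only [c]; ring
  have hcc : ∀ i, c i * (c i * ‖v i‖ ^ 2) = c i * ⟪v i, x⟫ := fun i => by
    rcases eq_or_ne (v i) 0 with h | h
    · simp [c, h]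
    · simp only [c]; field_simp
  set p := ∑ i, c i • v i
  have hpx : ⟪p, x⟫ = ∑ i, ⟪v i, x⟫ ^ 2 / ‖v i‖ ^ 2 := by
    simp only [p, sum_inner, real_inner_smul_left, hc]
  have hpp : ‖p‖ ^ 2 = ∑ i, ⟪v i, x⟫ ^ 2 / ‖v i‖ ^ 2 := by
    rw [← real_inner_self_eq_norm_sq]
    simp only [p, sum_inner, inner_sum, real_inner_smul_left, real_inner_smul_right]
    refine sum_congr rfl fun i _ => ?_
    rw [sum_eq_single i (fun j _ hji => by rw [hv hji, mul_zero, mul_zero])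
      (by simp), real_inner_self_eq_norm_sq, hcc, hc]
  nlinarith [norm_sub_sq_real x p, sq_nonneg ‖x - p‖, real_inner_comm x p]

end OrthogonalFamilies

theorem Fin.sum_filter_lt_add_sum_filter_le {M : Type*} [AddCommMonoid M] {N : ℕ} (R : ℕ)
    (f : Fin N → M) : ∑ r with r.val < R, f r + ∑ r with R ≤ r.val, f r = ∑ r, f r := by
  simp_rw [← not_lt]
  exact sum_filter_add_sum_filter_not _ _ _

theorem Antitone.sum_mul_le_sum_filter_lt {N R : ℕ} {lam t : Fin N → ℝ} (hlam : Antitone lam)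
    (hlam0 : ∀ r, 0 ≤ lam r) (ht0 : ∀ r, 0 ≤ t r) (ht1 : ∀ r, t r ≤ 1)
    (ht : ∑ r, t r ≤ R) : ∑ r, lam r * t r ≤ ∑ r with r.val < R, lam r := by
  rcases le_or_gt N R with hNR | hRN
  · rw [filter_true_of_mem fun r _ => r.2.trans_le hNR]
    exact sum_le_sum fun r _ => mul_le_of_le_one_right (hlam0 r) (ht1 r)
  -- bathtub principle with threshold `c = lam R`
  set c := lam ⟨R, hRN⟩
  have hc : ∀ r, lam r * t r ≤ (if r.val < R then lam r - c else 0) + c * t r := fun r => by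
    split_ifs with h
    · nlinarith [hlam (show r ≤ ⟨R, hRN⟩ from h.le), ht1 r]
    · nlinarith [hlam (show ⟨R, hRN⟩ ≤ r from not_lt.1 h), ht0 r]
  have hcard : #{r : Fin N | r.val < R} = R := by
    rw [Fin.card_filter_val_lt, min_eq_right hRN.le]
  calc ∑ r, lam r * t r
      ≤ ∑ r : Fin N, ((if r.val < R then lam r - c else 0) + c * t r) :=
        sum_le_sum fun r _ => hc r
    _ = ∑ r with r.val < R, lam r - c * R + c * ∑ r, t r := by
      rw [sum_add_distrib, ← sum_filter, sum_sub_distrib, sum_const, hcard, mul_sum,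
        nsmul_eq_mul, mul_comm]
    _ ≤ ∑ r with r.val < R, lam r := by nlinarith [hlam0 ⟨R, hRN⟩]

section MulFamily

variable {m n : Type*} [Fintype n]

def Matrix.mulFamily (A : Matrix m n ℝ) (u : n → V) (i : m) : V :=
  ∑ j, A i j • u j

theorem Matrix.inner_mulFamily_left (A : Matrix m n ℝ) (u : n → V) (i : m) (x : V) :
    ⟪A.mulFamily u i, x⟫ = (A *ᵥ fun j => ⟪u j, x⟫) i := by
  simp only [mulFamily, sum_inner, real_inner_smul_left, mulVec, dotProduct]

theorem Matrix.sum_inner_mulFamily [Fintype m] (A : Matrix m n ℝ) (u : n → V) (y : m → V) :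
    ∑ i, ⟪A.mulFamily u i, y i⟫ = ∑ j, ⟪u j, Aᵀ.mulFamily y j⟫ := by
  simp only [mulFamily, sum_inner, inner_sum, real_inner_smul_left, real_inner_smul_right,
    transpose_apply]
  exact sum_comm

theorem Matrix.mulFamily_mulFamily {l : Type*} [Fintype m] (A : Matrix l m ℝ)
    (B : Matrix m n ℝ) (u : n → V) : A.mulFamily (B.mulFamily u) = (A * B).mulFamily u := by
  ext i
  simp only [mulFamily, smul_sum, smul_smul, mul_apply, sum_smul]
  exact sum_comm

theorem Matrix.one_mulFamily [DecidableEq n] (u : n → V) : (1 : Matrix n n ℝ).mulFamily u = u := by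
  ext i
  simp [mulFamily, one_apply]

theorem Matrix.sum_mulVec_sq [Fintype m] [DecidableEq n] {A : Matrix m n ℝ} (hA : Aᵀ * A = 1)
    (w : n → ℝ) : ∑ i, (A *ᵥ w) i ^ 2 = ∑ j, w j ^ 2 := by
  have h : (A *ᵥ w) ⬝ᵥ (A *ᵥ w) = w ⬝ᵥ w := by
    rw [dotProduct_mulVec, ← vecMul_transpose, vecMul_vecMul, hA, vecMul_one]
  simpa only [dotProduct, sq] using h

variable [Fintype m] [DecidableEq n] {A : Matrix m n ℝ}

theorem Matrix.sum_inner_mulFamily_sq (hA : Aᵀ * A = 1) (u : n → V) (x : V) :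
    ∑ i, ⟪A.mulFamily u i, x⟫ ^ 2 = ∑ j, ⟪u j, x⟫ ^ 2 := by
  simp_rw [inner_mulFamily_left]
  exact sum_mulVec_sq hA _

theorem Matrix.sum_norm_mulFamily_sq (hA : Aᵀ * A = 1) (u : n → V) :
    ∑ i, ‖A.mulFamily u i‖ ^ 2 = ∑ j, ‖u j‖ ^ 2 := by
  simp_rw [← real_inner_self_eq_norm_sq]
  rw [sum_inner_mulFamily, mulFamily_mulFamily, hA, one_mulFamily]

end MulFamily

theorem Matrix.inner_mulFamily_mulFamily_of_mulVec_eq_smul {ι : Type*} [Fintype ι]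
    [DecidableEq ι] {A G : Matrix ι ι ℝ} {lam : ι → ℝ} {u : ι → V}
    (hG : ∀ i j, G i j = ⟪u i, u j⟫) (hA : A * Aᵀ = 1) (hAG : ∀ r, G *ᵥ A r = lam r • A r)
    (r s : ι) : ⟪A.mulFamily u r, A.mulFamily u s⟫ = if r = s then lam r else 0 := by
  have hu : (fun j => ⟪u j, A.mulFamily u s⟫) = G *ᵥ A s := by
    ext j
    simp only [mulFamily, inner_sum, real_inner_smul_right, mulVec, dotProduct, hG, mul_comm]
  have hAA : (A *ᵥ A s) r = (A * Aᵀ) r s := by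
    simp only [mulVec, dotProduct, mul_apply, transpose_apply]
  rw [inner_mulFamily_left, hu, hAG, mulVec_smul, Pi.smul_apply, hAA, hA, one_apply]
  split_ifs with h <;> simp [h]

section ProjectionError

variable {ι κ : Type*} [Fintype ι]

def projError (u : ι → V) (ψ : κ → V) (s : Finset κ) : ℝ :=
  ∑ n, ‖u n - ∑ k ∈ s, ⟪u n, ψ k⟫ • ψ k‖ ^ 2

theorem projError_eq {u : ι → V} {ψ : κ → V} {s : Finset κ}
    (hψ : Orthonormal ℝ (ψ ∘ ((↑) : s → κ))) :
    projError u ψ s = ∑ n, ‖u n‖ ^ 2 - ∑ k ∈ s, ∑ n, ⟪u n, ψ k⟫ ^ 2 := by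
  have h := fun x => hψ.norm_sub_sum_inner_smul_sq univ x
  simp only [Function.comp_apply] at h
  simp_rw [projError, ← sum_coe_sort s, h, sum_sub_distrib]
  rw [sum_comm]

variable [DecidableEq ι] {N : ℕ} {A : Matrix (Fin N) ι ℝ} {u : ι → V}

theorem Matrix.sum_filter_norm_mulFamily_sq_le_projError (hA : Aᵀ * A = 1)
    (horth : Pairwise fun r s => ⟪A.mulFamily u r, A.mulFamily u s⟫ = 0)
    (hanti : Antitone fun r => ‖A.mulFamily u r‖ ^ 2) {R : ℕ} {ψ : Fin R → V}
    (hψ : Orthonormal ℝ ψ) :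
    ∑ r with R ≤ r.val, ‖A.mulFamily u r‖ ^ 2 ≤ projError u ψ univ := by
  set S := A.mulFamily u with hS
  set t : Fin N → ℝ := fun r => ∑ k, ⟪S r, ψ k⟫ ^ 2 / ‖S r‖ ^ 2
  have hcaptured : ∑ k, ∑ n, ⟪u n, ψ k⟫ ^ 2 = ∑ r, ‖S r‖ ^ 2 * t r := by
    simp_rw [← sum_inner_mulFamily_sq hA u, ← hS, t, mul_sum]
    rw [sum_comm]
    refine sum_congr rfl fun r _ => sum_congr rfl fun k _ => ?_
    rcases eq_or_ne (S r) 0 with h | h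
    · simp [h]
    · field_simp
  have ht1 : ∀ r, t r ≤ 1 := fun r => by
    simp only [t, ← sum_div]
    refine div_le_one_of_le₀ ?_ (by positivity)
    simpa only [Real.norm_eq_abs, sq_abs, real_inner_comm] using hψ.sum_inner_products_le (S r)
  have ht : ∑ r, t r ≤ R := by
    calc ∑ r, t r = ∑ k, ∑ r, ⟪S r, ψ k⟫ ^ 2 / ‖S r‖ ^ 2 := sum_comm
      _ ≤ ∑ k : Fin R, ‖ψ k‖ ^ 2 := sum_le_sum fun k _ => sum_inner_sq_div_norm_sq_le horth _
      _ = R := by simp [hψ.1]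
  have hKyFan : ∑ r, ‖S r‖ ^ 2 * t r ≤ ∑ r with r.val < R, ‖S r‖ ^ 2 :=
    hanti.sum_mul_le_sum_filter_lt (fun r => sq_nonneg _) (fun r => by positivity) ht1 ht
  rw [projError_eq (hψ.comp _ Subtype.val_injective), hcaptured, ← sum_norm_mulFamily_sq hA u,
    ← Fin.sum_filter_lt_add_sum_filter_le R]
  linarith

theorem Matrix.projError_eq_sum_filter_norm_mulFamily_sq (hA : Aᵀ * A = 1)
    (horth : Pairwise fun r s => ⟪A.mulFamily u r, A.mulFamily u s⟫ = 0) {R : ℕ} {e : Fin N → V}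
    (hS0 : ∀ k : Fin N, (k : ℕ) < R → A.mulFamily u k ≠ 0)
    (he : ∀ k : Fin N, (k : ℕ) < R → e k = ‖A.mulFamily u k‖⁻¹ • A.mulFamily u k) :
    projError u e {k | k.val < R} = ∑ r with R ≤ r.val, ‖A.mulFamily u r‖ ^ 2 := by
  set S := A.mulFamily u with hS
  set s : Finset (Fin N) := {k | k.val < R}
  have hs : ∀ k ∈ s, (k : ℕ) < R := fun k hk => (mem_filter.1 hk).2
  have he_orth : Orthonormal ℝ (e ∘ ((↑) : s → Fin N)) := by
    have he' : e ∘ ((↑) : s → Fin N) = fun k : s => ‖S k‖⁻¹ • S k :=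
      funext fun k => he k (hs k k.2)
    rw [he']
    exact orthonormal_inv_norm_smul (fun i j hij => horth (Subtype.coe_injective.ne hij))
      fun k => hS0 k (hs k k.2)
  have hcaptured : ∀ k ∈ s, ∑ n, ⟪u n, e k⟫ ^ 2 = ‖S k‖ ^ 2 := fun k hk => by
    rw [← sum_inner_mulFamily_sq hA u, ← hS, sum_eq_single k, he k (hs k hk),
      real_inner_smul_right, real_inner_self_eq_norm_sq]
    · field_simp [norm_ne_zero_iff.2 (hS0 k (hs k hk))]
    · intro r _ hrk
      rw [he k (hs k hk), real_inner_smul_right, horth hrk, mul_zero, sq, zero_mul]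
    · simp
  rw [projError_eq he_orth, sum_congr rfl hcaptured, ← sum_norm_mulFamily_sq hA u,
    ← Fin.sum_filter_lt_add_sum_filter_le R]
  ring

end ProjectionError

end

theorem pod_optimality_general
    {V : Type*} [NormedAddCommGroup V] [InnerProductSpace ℝ V]
    {N D : ℕ}
    (u : Fin N → V)
    (G : Matrix (Fin N) (Fin N) ℝ)
    (hG : ∀ i j : Fin N, G i j = ⟪u i, u j⟫)
    (a : Fin N → Fin N → ℝ)
    (ha_orth : ∀ r s : Fin N, ∑ n : Fin N, a r n * a s n = if r = s then (1 : ℝ) else 0)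
    (lam : Fin N → ℝ)
    (h_eig : ∀ r : Fin N, G.mulVec (a r) = lam r • a r)
    (h_mono : ∀ r s : Fin N, r ≤ s → lam s ≤ lam r)
    (h_pos : ∀ r : Fin N, (r : ℕ) < D → 0 < lam r)
    (φ : Fin N → V)
    (hφ : ∀ r : Fin N, (r : ℕ) < D →
      φ r = (Real.sqrt (lam r))⁻¹ • ∑ n : Fin N, a r n • u n) :
    ∀ R : ℕ, 1 ≤ R → R ≤ D →
      (∀ ψ : Fin R → V, Orthonormal ℝ ψ →
        ∑ r ∈ Finset.univ.filter (fun r : Fin N => R ≤ (r : ℕ)), lam r ≤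
          ∑ n : Fin N, ‖u n - ∑ k : Fin R, ⟪u n, ψ k⟫ • ψ k‖ ^ 2) ∧
      ∑ n : Fin N,
          ‖u n - ∑ k ∈ Finset.univ.filter (fun k : Fin N => (k : ℕ) < R),
            ⟪u n, φ k⟫ • φ k‖ ^ 2
        = ∑ r ∈ Finset.univ.filter (fun r : Fin N => R ≤ (r : ℕ)), lam r := by
  intro R _ hRD
  -- `A.mulFamily u r = ∑ n, a r n • u n` is the unnormalised POD mode `√(lam r) • φ r`
  set A := Matrix.of a
  have hrow : A * Aᵀ = 1 := by
    ext r s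
    simpa [A, mul_apply, one_apply] using ha_orth r s
  have hinner := inner_mulFamily_mulFamily_of_mulVec_eq_smul hG hrow h_eig
  have hnorm : ∀ r, ‖A.mulFamily u r‖ ^ 2 = lam r := fun r => by
    rw [← real_inner_self_eq_norm_sq, hinner, if_pos rfl]
  have hA : Aᵀ * A = 1 := mul_eq_one_comm.mp hrow
  have horth : Pairwise fun r s => ⟪A.mulFamily u r, A.mulFamily u s⟫ = 0 := fun r s h =>
    (hinner r s).trans (if_neg h)
  have hanti : Antitone fun r => ‖A.mulFamily u r‖ ^ 2 := fun r s h => by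
    simpa only [hnorm] using h_mono r s h
  simp only [← hnorm]
  refine ⟨fun ψ hψ => sum_filter_norm_mulFamily_sq_le_projError hA horth hanti hψ,
    projError_eq_sum_filter_norm_mulFamily_sq hA horth (fun k hk => ?_) (fun k hk => ?_)⟩
  · intro h0
    simpa [← hnorm, h0] using h_pos k (hk.trans_le hRD)
  · rw [hφ k (hk.trans_le hRD), ← hnorm, Real.sqrt_sq (norm_nonneg _)]
    rfl

/-- **Mean-square optimality of the POD basis.** For every `1 ≤ R ≤ D` and every `V`-orthonormal family `ψ 1, …, ψ R`, the mean-square snapshot approximation error is at least `∑_{r ≥ R} λ r`, and the POD basis functions `φ 0, …, φ (R-1)` attain this minimum. -/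
theorem pod_optimality
    {V : Type*} [NormedAddCommGroup V] [InnerProductSpace ℝ V]
    {N D : ℕ} (hD : D ≤ N)
    (u : Fin N → V)
    (G : Matrix (Fin N) (Fin N) ℝ)
    (hG : ∀ i j : Fin N, G i j = ⟪u i, u j⟫)
    (a : Fin N → Fin N → ℝ)
    (ha_orth : ∀ r s : Fin N, ∑ n : Fin N, a r n * a s n = if r = s then (1 : ℝ) else 0)
    (lam : Fin N → ℝ)
    (h_eig : ∀ r : Fin N, G.mulVec (a r) = lam r • a r)
    (h_mono : ∀ r s : Fin N, r ≤ s → lam s ≤ lam r)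
    (h_nonneg : ∀ r : Fin N, 0 ≤ lam r)
    (h_pos : ∀ r : Fin N, (r : ℕ) < D → 0 < lam r)
    (h_zero : ∀ r : Fin N, D ≤ (r : ℕ) → lam r = 0)
    (φ : Fin N → V)
    (hφ : ∀ r : Fin N, (r : ℕ) < D →
      φ r = (Real.sqrt (lam r))⁻¹ • ∑ n : Fin N, a r n • u n) :
    ∀ R : ℕ, 1 ≤ R → R ≤ D →
      (∀ ψ : Fin R → V, Orthonormal ℝ ψ →
        ∑ r ∈ Finset.univ.filter (fun r : Fin N => R ≤ (r : ℕ)), lam r ≤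
          ∑ n : Fin N, ‖u n - ∑ k : Fin R, ⟪u n, ψ k⟫ • ψ k‖ ^ 2) ∧
      ∑ n : Fin N,
          ‖u n - ∑ k ∈ Finset.univ.filter (fun k : Fin N => (k : ℕ) < R),
            ⟪u n, φ k⟫ • φ k‖ ^ 2
        = ∑ r ∈ Finset.univ.filter (fun r : Fin N => R ≤ (r : ℕ)), lam r :=
  pod_optimality_general u G hG a ha_orth lam h_eig h_mono h_pos φ hφ
end

section
/- Suppose u ∈ V satisfies a(u, v) = f(v) for all v ∈ V. Let V_n and V^R be finite-dimensional subspaces of V, let u_n be a Galerkin solution on V_n, and let u^R be a Galerkin solution on V^R. Then the error of the reduced-order solution with respect to the true solution splits as ‖u − u^R‖_V ≤ (γ/α) ‖u_n − P_{V^R} u_n‖_V + (γ/α)² ‖u − P_{V_n} u‖_V. -/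
open scoped RealInnerProductSpace

/-!
Two applications of Céa's lemma. Galerkin orthogonality `a (u - u_W) w = 0` on `W`, with
coercivity and continuity, gives the quasi-optimality `‖u - u_W‖ ≤ (γ/α) ‖u - w‖` for every
`w ∈ W`. Taking `W = V^R` and `w = P_{V^R} u_n`, the triangle inequality through `u_n` gives
`‖u - u^R‖ ≤ (γ/α) (‖u - u_n‖ + ‖u_n - P_{V^R} u_n‖)`, and Céa on `V_n` with `w = P_{V_n} u`
bounds `‖u - u_n‖ ≤ (γ/α) ‖u - P_{V_n} u‖`.
-/

section Galerkin

variable {V : Type*} [NormedAddCommGroup V] [InnerProductSpace ℝ V]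

theorem orthProj_mem (K : Submodule ℝ V) [FiniteDimensional ℝ K] (x : V) :
    orthProj K x ∈ K := by
  simp only [orthProj, dif_pos ‹FiniteDimensional ℝ K›]
  exact (K.orthogonalProjectionOnto x).2

theorem galerkin_orthogonality (a : V →ₗ[ℝ] V →ₗ[ℝ] ℝ) (f : V →ₗ[ℝ] ℝ)
    {u : V} (hu : ∀ v, a u v = f v) {W : Submodule ℝ V} {uW : V}
    (hGal : ∀ w ∈ W, a uW w = f w) {w : V} (hw : w ∈ W) :
    a (u - uW) w = 0 := by
  rw [map_sub, LinearMap.sub_apply, hu, hGal w hw, sub_self]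

variable {a : V →ₗ[ℝ] V →ₗ[ℝ] ℝ} {α γ : ℝ}

theorem le_continuity_const [Nontrivial V]
    (hcoer : ∀ v : V, α * ‖v‖ ^ 2 ≤ a v v)
    (hcont : ∀ v w : V, |a v w| ≤ γ * ‖v‖ * ‖w‖) :
    α ≤ γ := by
  obtain ⟨v, hv⟩ := exists_ne (0 : V)
  refine le_of_mul_le_mul_right ?_ (pow_pos (norm_pos_iff.mpr hv) 2)
  calc α * ‖v‖ ^ 2 ≤ a v v := hcoer v
    _ ≤ |a v v| := le_abs_self _
    _ ≤ γ * ‖v‖ * ‖v‖ := hcont v v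
    _ = γ * ‖v‖ ^ 2 := by ring

theorem norm_sub_le_of_galerkin_orthogonal (hα : 0 < α) (hγ : 0 ≤ γ)
    (hcoer : ∀ v : V, α * ‖v‖ ^ 2 ≤ a v v)
    (hcont : ∀ v w : V, |a v w| ≤ γ * ‖v‖ * ‖w‖)
    {W : Submodule ℝ V} {u uW : V} (huW : uW ∈ W) (horth : ∀ w ∈ W, a (u - uW) w = 0)
    {w : V} (hw : w ∈ W) :
    ‖u - uW‖ ≤ γ / α * ‖u - w‖ := by
  set e := u - uW with he
  have hbound : α * ‖e‖ * ‖e‖ ≤ γ * ‖u - w‖ * ‖e‖ := calc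
    α * ‖e‖ * ‖e‖ = α * ‖e‖ ^ 2 := by ring
    _ ≤ a e e := hcoer e
    _ = a e (u - w) + a e (w - uW) := by rw [← map_add, he, sub_add_sub_cancel]
    _ = a e (u - w) := by rw [horth _ (W.sub_mem hw huW), add_zero]
    _ ≤ |a e (u - w)| := le_abs_self _
    _ ≤ γ * ‖e‖ * ‖u - w‖ := hcont _ _
    _ = γ * ‖u - w‖ * ‖e‖ := by ring
  rw [div_mul_eq_mul_div, le_div_iff₀ hα, mul_comm]
  rcases (norm_nonneg e).eq_or_lt with he0 | he0
  · rw [← he0, mul_zero]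
    positivity
  · exact le_of_mul_le_mul_right hbound he0

end Galerkin

/-- **Error split for the reduced-order solution w.r.t. the true solution.** `‖u - u^R‖ ≤ (γ/α)‖u_n - P_{V^R} u_n‖ + (γ/α)²‖u - P_{V_n} u‖`. -/
theorem rom_error_split_true
    {V : Type*} [NormedAddCommGroup V] [InnerProductSpace ℝ V]
    (a : V →ₗ[ℝ] V →ₗ[ℝ] ℝ) (f : V →ₗ[ℝ] ℝ)
    (α γ : ℝ) (hα : 0 < α)
    (hcoer : ∀ v : V, α * ‖v‖ ^ 2 ≤ a v v)
    (hcont : ∀ v w : V, |a v w| ≤ γ * ‖v‖ * ‖w‖)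
    (u : V) (hu : ∀ v : V, a u v = f v)
    (Vn VR : Submodule ℝ V) [FiniteDimensional ℝ ↥Vn] [FiniteDimensional ℝ ↥VR]
    (un : V) (hun : un ∈ Vn) (hGaln : ∀ w ∈ Vn, a un w = f w)
    (uR : V) (huR : uR ∈ VR) (hGalR : ∀ w ∈ VR, a uR w = f w) :
    ‖u - uR‖ ≤ (γ / α) * ‖un - orthProj VR un‖ + (γ / α) ^ 2 * ‖u - orthProj Vn u‖ := by
  -- On the zero space nothing forces `0 ≤ γ`; otherwise `α ≤ γ`.
  rcases subsingleton_or_nontrivial V with hV | hV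
  · rw [Subsingleton.elim (u - uR) 0, Subsingleton.elim (un - orthProj VR un) 0,
      Subsingleton.elim (u - orthProj Vn u) 0]
    simp
  have hγ : 0 ≤ γ := hα.le.trans (le_continuity_const hcoer hcont)
  have hcea_R : ‖u - uR‖ ≤ γ / α * ‖u - orthProj VR un‖ :=
    norm_sub_le_of_galerkin_orthogonal hα hγ hcoer hcont huR
      (fun _ hw ↦ galerkin_orthogonality a f hu hGalR hw) (orthProj_mem VR un)
  have hcea_n : ‖u - un‖ ≤ γ / α * ‖u - orthProj Vn u‖ :=
    norm_sub_le_of_galerkin_orthogonal hα hγ hcoer hcont hun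
      (fun _ hw ↦ galerkin_orthogonality a f hu hGaln hw) (orthProj_mem Vn u)
  calc ‖u - uR‖ ≤ γ / α * ‖u - orthProj VR un‖ := hcea_R
    _ ≤ γ / α * (‖u - un‖ + ‖un - orthProj VR un‖) := by
      gcongr
      exact norm_sub_le_norm_sub_add_norm_sub _ _ _
    _ ≤ γ / α * (γ / α * ‖u - orthProj Vn u‖ + ‖un - orthProj VR un‖) := by gcongr
    _ = γ / α * ‖un - orthProj VR un‖ + (γ / α) ^ 2 * ‖u - orthProj Vn u‖ := by ring
end
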